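/- arXiv:1907.10260 — 3 statements merged into one kernel-verified Lean document; each statement's English description precedes it below -/
import Mathlib

section
/- Let δ : A_1 → B_1, θ : A_2 → B_2, φ : A_1 → A_2, ρ : B_1 → B_2 be ring homomorphisms with θ ∘ φ = ρ ∘ δ, such that δ and θ are surjective, φ is injective, and ker θ ⊆ φ(ker δ). Then the map A_1 → B_1 ×_{B_2} A_2, a ↦ (δ(a), φ(a)), is a ring isomorphism onto the pullback {(b, a_2) ∈ B_1 × A_2 : ρ(b) = θ(a_2)}. -/
/-- Pedersen's pullback criterion (algebraic core): if `δ, θ` are surjective, `φ` is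
injective, the square commutes, and `ker θ ⊆ φ(ker δ)`, then `a ↦ (δ a, φ a)` is a ring
isomorphism of `A₁` onto the pullback `{(b, a₂) : ρ b = θ a₂}`. -/
theorem pedersen_pullback {A₁ B₁ A₂ B₂ : Type}
    [NonUnitalRing A₁] [NonUnitalRing B₁] [NonUnitalRing A₂] [NonUnitalRing B₂]
    (δ : A₁ →ₙ+* B₁) (θ : A₂ →ₙ+* B₂) (φ : A₁ →ₙ+* A₂) (ρ : B₁ →ₙ+* B₂)
    (hcomm : ∀ a, θ (φ a) = ρ (δ a))
    (hδ : Function.Surjective δ) (hθ : Function.Surjective θ)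
    (hφ : Function.Injective φ)
    (hker : ∀ a₂ : A₂, θ a₂ = 0 → ∃ a₁ : A₁, δ a₁ = 0 ∧ φ a₁ = a₂) :
    Function.Injective (fun a : A₁ => (δ a, φ a)) ∧
    Set.range (fun a : A₁ => (δ a, φ a)) = {p : B₁ × A₂ | ρ p.1 = θ p.2} := by
  constructor
  · intro a a' h
    exact hφ (congrArg Prod.snd h)
  · ext ⟨b, a₂⟩
    simp only [Set.mem_range, Set.mem_setOf_eq, Prod.mk.injEq]
    constructor
    · rintro ⟨a, rfl, rfl⟩
      exact (hcomm a).symm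
    · rintro h
      obtain ⟨a₁, rfl⟩ := hδ b
      have h0 : θ (a₂ - φ a₁) = 0 := by
        rw [map_sub, hcomm, h, sub_self]
      obtain ⟨c, hc1, hc2⟩ := hker _ h0
      exact ⟨a₁ + c, by rw [map_add, hc1, add_zero], by rw [map_add, hc2]; abel⟩
end

section
/- Let E_1, E_2 be directed graphs with the same vertex set, E_1 having no loops (no path of positive length with equal source and range). Let f be a functor between the free path categories of E_1 and E_2 that is the identity on vertices, satisfies f(α) ⪯ f(β) ⇒ α ⪯ β for the prolongation order, and whose image is exactly the set of pointed paths of E_2 (together with all trivial paths). Then for every edge e of E_1, the path f(e) is a pointed path from s(e) to r(e) that does not pass through any vertex other than s(e) and r(e). -/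
/-- A directed graph: vertices, edges, source and range maps. -/
structure DirGraph where
  V : Type
  E : Type
  s : E → V
  r : E → V

namespace DirGraph

/-- `G.IsPath v es`: the list of edges `es` is a finite path starting at vertex `v`. -/
def IsPath (G : DirGraph) : G.V → List G.E → Prop
  | _, [] => True
  | v, e :: es => G.s e = v ∧ G.IsPath (G.r e) es

/-- The range (endpoint) of a list of edges traversed starting at `v`. -/
def rng (G : DirGraph) (v : G.V) : List G.E → G.V
  | [] => v
  | e :: es => G.rng (G.r e) es

/-- A finite path in a graph: a source vertex together with a composable list of edges. -/
structure Path (G : DirGraph) where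
  src : G.V
  edges : List G.E
  isPath : G.IsPath src edges

/-- The range of a finite path. -/
def Path.rng {G : DirGraph} (p : Path G) : G.V := G.rng p.src p.edges

/-- The trivial path at a vertex. -/
def Path.trivialPath (G : DirGraph) (v : G.V) : Path G := ⟨v, [], trivial⟩

/-- The path consisting of a single edge. -/
def Path.single (G : DirGraph) (e : G.E) : Path G := ⟨G.s e, [e], ⟨rfl, trivial⟩⟩

theorem isPath_append {G : DirGraph} {v : G.V} {l₁ l₂ : List G.E}
    (h₁ : G.IsPath v l₁) (h₂ : G.IsPath (G.rng v l₁) l₂) : G.IsPath v (l₁ ++ l₂) := by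
  induction l₁ generalizing v with
  | nil => exact h₂
  | cons e es ih => exact ⟨h₁.1, ih h₁.2 h₂⟩

/-- Concatenation of composable paths. -/
def Path.comp {G : DirGraph} (p q : Path G) (h : q.src = p.rng) : Path G :=
  ⟨p.src, p.edges ++ q.edges, isPath_append p.isPath (by rw [show G.rng p.src p.edges = q.src from h.symm]; exact q.isPath)⟩

/-- The prolongation order: `Prolong β α` means `β ⪯ α`, i.e. `α = βγ` for some
path `γ` with `s(γ) = r(β)`. -/
def Prolong {G : DirGraph} (β α : Path G) : Prop :=
  α.src = β.src ∧ ∃ γ : List G.E, G.IsPath β.rng γ ∧ α.edges = β.edges ++ γ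

/-- A path is pointed iff its final edge (if any) is not a loop.
(Trivial paths are regarded as pointed.) -/
def Pointed {G : DirGraph} (p : Path G) : Prop :=
  ∀ e ∈ p.edges.getLast?, G.s e ≠ G.r e

/-- A functor between the free path categories of two directed graphs. -/
structure PathFunctor (G₁ G₂ : DirGraph) where
  obj : G₁.V → G₂.V
  map : Path G₁ → Path G₂
  map_src : ∀ p, (map p).src = obj p.src
  map_rng : ∀ p, (map p).rng = obj p.rng
  map_trivial : ∀ v, (map (Path.trivialPath G₁ v)).edges = ([] : List G₂.E)
  map_comp : ∀ (p q : Path G₁) (h : q.src = p.rng),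
    map (p.comp q h) = (map p).comp (map q) (by rw [map_src, map_rng, h])

end DirGraph


namespace DirGraph

theorem rng_append (G : DirGraph) (v : G.V) (l₁ l₂ : List G.E) :
    G.rng v (l₁ ++ l₂) = G.rng (G.rng v l₁) l₂ := by
  induction l₁ generalizing v with
  | nil => rfl
  | cons e es ih => exact ih (G.r e)

theorem isPath_append_left {G : DirGraph} {v : G.V} {l₁ l₂ : List G.E}
    (h : G.IsPath v (l₁ ++ l₂)) : G.IsPath v l₁ := by
  induction l₁ generalizing v with
  | nil => trivial
  | cons e es ih => exact ⟨h.1, ih h.2⟩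

theorem isPath_append_right {G : DirGraph} {v : G.V} {l₁ l₂ : List G.E}
    (h : G.IsPath v (l₁ ++ l₂)) : G.IsPath (G.rng v l₁) l₂ := by
  induction l₁ generalizing v with
  | nil => exact h
  | cons e es ih => exact ih h.2

theorem src_last {G : DirGraph} {v : G.V} {l : List G.E} {a : G.E}
    (h : G.IsPath v (l ++ [a])) : G.s a = G.rng v l := by
  induction l generalizing v with
  | nil => exact h.1
  | cons e es ih => exact ih h.2

theorem Path.ext' {G : DirGraph} {p q : Path G} (h₁ : p.src = q.src)
    (h₂ : p.edges = q.edges) : p = q := by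
  cases p; cases q; simp_all

theorem trim (G : DirGraph) (l : List G.E) (v : G.V) (h : G.IsPath v l) :
    ∃ l' γ, l = l' ++ γ ∧ (∀ e ∈ l'.getLast?, G.s e ≠ G.r e) ∧
      G.rng v l' = G.rng v l := by
  induction l using List.reverseRecOn with
  | nil => exact ⟨[], [], rfl, by simp, rfl⟩
  | append_singleton l₀ a ih =>
    by_cases hl : G.s a = G.r a
    · obtain ⟨l', γ, he, hp, hr⟩ := ih (isPath_append_left h)
      refine ⟨l', γ ++ [a], by simp [he], hp, ?_⟩
      rw [hr, rng_append]
      simp only [rng]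
      rw [← hl, src_last h]
    · exact ⟨l₀ ++ [a], [], by simp, by simp [hl], rfl⟩

end DirGraph

open DirGraph in
/-- Under the hypotheses of the main theorem, `f(e)` is a pointed path from `s(e)` to
`r(e)` not passing through any third vertex. -/
theorem image_of_edge_pointed_no_third_vertex {V E₁ E₂ : Type}
    (s₁ r₁ : E₁ → V) (s₂ r₂ : E₂ → V)
    (f : PathFunctor (DirGraph.mk V E₁ s₁ r₁) (DirGraph.mk V E₂ s₂ r₂))
    (hobj : ∀ v : V, f.obj v = v)
    (hnoloop : ∀ p : Path (DirGraph.mk V E₁ s₁ r₁), p.edges ≠ [] → p.src ≠ p.rng)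
    (hrefl : ∀ α β : Path (DirGraph.mk V E₁ s₁ r₁),
      Prolong (f.map α) (f.map β) → Prolong α β)
    (himg₁ : ∀ p : Path (DirGraph.mk V E₁ s₁ r₁), Pointed (f.map p))
    (himg₂ : ∀ q : Path (DirGraph.mk V E₂ s₂ r₂), Pointed q → ∃ p, f.map p = q) :
    ∀ e : E₁,
      (f.map (Path.single _ e)).edges ≠ [] ∧
      Pointed (f.map (Path.single _ e)) ∧
      (f.map (Path.single _ e)).src = s₁ e ∧
      (f.map (Path.single _ e)).rng = r₁ e ∧
      ∀ l₁ l₂ : List E₂, (f.map (Path.single _ e)).edges = l₁ ++ l₂ → l₁ ≠ [] → l₂ ≠ [] →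
        (DirGraph.mk V E₂ s₂ r₂).rng (f.map (Path.single _ e)).src l₁ = s₁ e ∨
        (DirGraph.mk V E₂ s₂ r₂).rng (f.map (Path.single _ e)).src l₁ = r₁ e := by
  intro e
  have hsingle_rng : (Path.single (DirGraph.mk V E₁ s₁ r₁) e).rng = r₁ e := rfl
  have hsingle_src : (Path.single (DirGraph.mk V E₁ s₁ r₁) e).src = s₁ e := rfl
  set q : Path (DirGraph.mk V E₂ s₂ r₂) := f.map (Path.single _ e) with hq
  have hsrc : q.src = s₁ e := by rw [hq, f.map_src, hobj]; rfl
  have hrng : q.rng = r₁ e := by rw [hq, f.map_rng, hobj]; rfl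
  have hne : q.edges ≠ [] := by
    intro hn
    have h1 : q.src = q.rng := by simp only [Path.rng, hn, rng]
    rw [hsrc, hrng] at h1
    exact hnoloop (Path.single _ e) (by simp [Path.single]) (by rw [hsingle_src, hsingle_rng]; exact h1)
  refine ⟨hne, himg₁ _, hsrc, hrng, ?_⟩
  intro l₁ l₂ hsplit _ _
  have hpath₁ : (DirGraph.mk V E₂ s₂ r₂).IsPath q.src l₁ :=
    isPath_append_left (by rw [← hsplit]; exact q.isPath)
  obtain ⟨l', γ', heq, hpt, hr⟩ := trim _ l₁ q.src hpath₁
  set β : Path (DirGraph.mk V E₂ s₂ r₂) := ⟨q.src, l', isPath_append_left (heq ▸ hpath₁)⟩ with hβ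
  have hprol : Prolong β q := by
    refine ⟨rfl, γ' ++ l₂, ?_, by rw [hsplit, heq, List.append_assoc]⟩
    have h2 : (DirGraph.mk V E₂ s₂ r₂).IsPath q.src (l' ++ (γ' ++ l₂)) := by
      rw [← List.append_assoc, ← heq, ← hsplit]; exact q.isPath
    exact isPath_append_right h2
  obtain ⟨α, hα⟩ := himg₂ β hpt
  have hprol' : Prolong α (Path.single _ e) := hrefl α _ (by rw [hα, ← hq]; exact hprol)
  obtain ⟨hαsrc, δ, hδp, hδe⟩ := hprol'
  rcases hα' : α.edges with _ | ⟨a, t⟩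
  · left
    have hat : α = Path.trivialPath _ α.src := Path.ext' rfl hα'
    have hβe : β.edges = [] := by rw [← hα, hat, f.map_trivial]
    have hl'e : l' = [] := hβe
    rw [show (DirGraph.mk V E₂ s₂ r₂).rng q.src l₁ = s₁ e ↔ True from ?_]
    · trivial
    rw [← hr, hl'e]
    simp [rng, hsrc]
  · right
    rw [hα', Path.single] at hδe
    simp only [List.cons_append, List.cons.injEq] at hδe
    obtain ⟨hae, hte⟩ := hδe
    have hte' : t = [] := by cases h3 : t <;> simp [h3] at hte ⊢
    have hαe : α = Path.single (DirGraph.mk V E₁ s₁ r₁) e := by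
      refine Path.ext' ?_ ?_
      · rw [← hαsrc]
      · rw [hα', hte', ← hae]; rfl
    have hβq : β = q := by rw [← hα, hαe, ← hq]
    have hl'q : l' = q.edges := congrArg Path.edges hβq
    have h4 : (DirGraph.mk V E₂ s₂ r₂).rng q.src l' = q.rng := by rw [hl'q]; rfl
    rw [← hr, h4, hrng]
end

section
/- Let E_1, E_2 be directed graphs with the same vertex set, E_1 having no loops, and let f be a functor between their free path categories that is the identity on vertices, satisfies f(α) ⪯ f(β) ⇒ α ⪯ β, and whose image is exactly the set of pointed paths of E_2 (plus trivial paths). If v is a vertex that emits at least one and at most finitely many edges in E_1, then E_2 has no loop based at v, and f maps every edge of E_1 with source v to an edge of E_2. -/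
/-!
A loop edge `c` at `v` in `E₂` is impossible: fixing an edge `e` of `E₁` at `v`, every path
`cⁿ f(e)` is pointed, hence equals `f(βₙ)` for a path `βₙ` starting with some edge `bₙ` at `v`.
Then `f(bₙ) ⪯ cⁿ f(e)`, and since `f(bₙ)` is pointed it cannot stop inside `cⁿ`, so `f(bₙ)` has
more than `n` edges; finitely many edges at `v` cannot do this for all `n`.
A loop at `v` ends either in a loop edge at `v` or is pointed, and pointed loops are images of
loops of `E₁`. Finally, if `f(e) = d ρ`, then the edge `d` is pointed, so `d = f(p)` with
`f(p) ⪯ f(e)`; reflecting the order gives `p ⪯ e`, so `p = e` and `f(e) = d`.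
-/

theorem List.lt_length_of_prefix_replicate_append {α : Type*} {l m : List α} {c : α} {n : ℕ}
    (hl : l ≠ []) (hlast : l.getLast hl ≠ c) (h : l <+: List.replicate n c ++ m) :
    n < l.length := by
  by_contra! hle
  have hrep : l <+: List.replicate n c :=
    List.prefix_of_prefix_length_le h (List.prefix_append _ _) (by simpa using hle)
  exact hlast (List.eq_of_mem_replicate (hrep.subset (List.getLast_mem hl)))

namespace DirGraph

attribute [ext] Path

def LoopFree (G : DirGraph) : Prop :=
  ∀ p : Path G, p.edges ≠ [] → p.src ≠ p.rng

variable {G : DirGraph}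

theorem rng_eq_r_of_mem_getLast? {v : G.V} {l : List G.E} {e : G.E} (h : e ∈ l.getLast?) :
    G.rng v l = G.r e := by
  induction l generalizing v with
  | nil => cases h
  | cons a l ih =>
    cases l with
    | nil => cases h; rfl
    | cons b l => exact ih (v := G.r a) h

theorem isPath_replicate_append {v : G.V} {c : G.E} {m : List G.E} (hs : G.s c = v)
    (hr : G.r c = v) (hm : G.IsPath v m) (n : ℕ) : G.IsPath v (List.replicate n c ++ m) := by
  induction n with
  | zero => exact hm
  | succ n ih => exact ⟨hs, hr ▸ ih⟩

theorem Path.rng_eq_src_of_edges_eq_nil {p : Path G} (h : p.edges = []) : p.rng = p.src := by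
  simp [Path.rng, h, DirGraph.rng]

theorem Pointed.getLast_ne {p : Path G} (hp : Pointed p) (hne : p.edges ≠ []) :
    G.s (p.edges.getLast hne) ≠ G.r (p.edges.getLast hne) :=
  hp _ (List.getLast?_eq_some_getLast hne)

theorem pointed_single {e : G.E} (he : G.s e ≠ G.r e) : Pointed (Path.single G e) := by
  simpa [Pointed, Path.single] using he

theorem exists_loop_edge_of_not_pointed {p : Path G} (hp : ¬ Pointed p) :
    ∃ c, G.s c = p.rng ∧ G.r c = p.rng := by
  simp only [Pointed, not_forall, not_not] at hp
  obtain ⟨c, hc, hloop⟩ := hp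
  have hrng : p.rng = G.r c := rng_eq_r_of_mem_getLast? hc
  exact ⟨c, hloop.trans hrng.symm, hrng.symm⟩

theorem prolong_single_of_isPath_cons {v : G.V} {b : G.E} {γ : List G.E}
    (h : G.IsPath v (b :: γ)) : Prolong (Path.single G b) ⟨v, b :: γ, h⟩ :=
  ⟨h.1.symm, γ, h.2, rfl⟩

theorem prolong_comp (p q : Path G) (h : q.src = p.rng) : Prolong p (p.comp q h) :=
  ⟨rfl, q.edges, h ▸ q.isPath, rfl⟩

theorem Prolong.eq_single {p : Path G} {e : G.E} (h : Prolong p (Path.single G e))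
    (hp : p.edges ≠ []) : p = Path.single G e := by
  obtain ⟨hsrc, γ, -, hedges⟩ := h
  have : p.edges = [e] := by
    rcases List.singleton_eq_append_iff.mp hedges with ⟨hnil, -⟩ | ⟨hsingle, -⟩
    exacts [absurd hnil hp, hsingle]
  exact Path.ext hsrc.symm this

namespace PathFunctor

variable {G₁ G₂ : DirGraph} (f : PathFunctor G₁ G₂)

theorem map_edges_eq_nil {p : Path G₁} (h : p.edges = []) : (f.map p).edges = [] := by
  rw [show p = Path.trivialPath G₁ p.src from Path.ext rfl h]
  exact f.map_trivial _

theorem map_prolong {α β : Path G₁} (h : Prolong α β) : Prolong (f.map α) (f.map β) := by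
  obtain ⟨hsrc, γ, hγ, hedges⟩ := h
  rw [show β = α.comp ⟨α.rng, γ, hγ⟩ rfl from Path.ext hsrc hedges, f.map_comp]
  exact prolong_comp _ _ _

theorem map_edges_ne_nil (hinj : Function.Injective f.obj) (hG₁ : LoopFree G₁) {p : Path G₁}
    (hp : p.edges ≠ []) : (f.map p).edges ≠ [] := by
  intro h
  apply hG₁ p hp
  apply hinj
  rw [← f.map_src, ← f.map_rng, Path.rng_eq_src_of_edges_eq_nil h]

theorem src_ne_rng_of_pointed (hinj : Function.Injective f.obj) (hG₁ : LoopFree G₁)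
    (hrange : Set.range f.map = {q | Pointed q}) {q : Path G₂} (hq : Pointed q)
    (hne : q.edges ≠ []) : q.src ≠ q.rng := by
  obtain ⟨p, rfl⟩ : q ∈ Set.range f.map := hrange ▸ hq
  rw [f.map_src, f.map_rng]
  exact hinj.ne (hG₁ p fun h => hne (f.map_edges_eq_nil h))

theorem exists_lt_length_map_single (hinj : Function.Injective f.obj) (hG₁ : LoopFree G₁)
    (hrange : Set.range f.map = {q | Pointed q}) {e : G₁.E} {c : G₂.E}
    (hc : G₂.s c = f.obj (G₁.s e)) (hloop : G₂.r c = G₂.s c) (n : ℕ) :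
    ∃ b, G₁.s b = G₁.s e ∧ n < (f.map (Path.single G₁ b)).edges.length := by
  have hpointed : ∀ p, Pointed (f.map p) := fun p => hrange.subset (Set.mem_range_self p)
  set m := (f.map (Path.single G₁ e)).edges
  have hm : m ≠ [] := f.map_edges_ne_nil hinj hG₁ (List.cons_ne_nil _ _)
  have hmpath : G₂.IsPath (f.obj (G₁.s e)) m := f.map_src (Path.single G₁ e) ▸ (f.map _).isPath
  let q : Path G₂ := ⟨_, _, isPath_replicate_append hc (hloop.trans hc) hmpath n⟩
  have hq : Pointed q := by
    simpa only [Pointed, q, List.getLast?_append_of_ne_nil _ hm] using hpointed _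
  obtain ⟨⟨src, edges, hpath⟩, hβ⟩ : q ∈ Set.range f.map := hrange ▸ hq
  cases edges with
  | nil =>
    have := congrArg Path.edges hβ
    simp [f.map_edges_eq_nil (p := ⟨src, [], hpath⟩) rfl, q, hm] at this
  | cons b γ =>
    have hsrc : src = G₁.s e := hinj ((f.map_src _).symm.trans (congrArg Path.src hβ))
    refine ⟨b, hpath.1.trans hsrc, ?_⟩
    obtain ⟨-, γ', -, hγ'⟩ := f.map_prolong (prolong_single_of_isPath_cons hpath)
    rw [hβ] at hγ'
    have hb := f.map_edges_ne_nil hinj hG₁ (p := Path.single G₁ b) (List.cons_ne_nil b [])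
    refine List.lt_length_of_prefix_replicate_append hb (fun hlast => ?_) ⟨γ', hγ'.symm⟩
    exact (hpointed _).getLast_ne hb (by rw [hlast, hloop])

theorem not_finite_of_loop_edge (hinj : Function.Injective f.obj) (hG₁ : LoopFree G₁)
    (hrange : Set.range f.map = {q | Pointed q}) {e : G₁.E} {c : G₂.E}
    (hc : G₂.s c = f.obj (G₁.s e)) (hloop : G₂.r c = G₂.s c) :
    ¬ Set.Finite {b | G₁.s b = G₁.s e} := by
  intro hfin
  obtain ⟨M, hM⟩ := (hfin.image fun b => (f.map (Path.single G₁ b)).edges.length).bddAbove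
  obtain ⟨b, hb, hlt⟩ := f.exists_lt_length_map_single hinj hG₁ hrange hc hloop M
  exact (hM ⟨b, hb, rfl⟩).not_gt hlt

theorem length_map_single_eq_one (hinj : Function.Injective f.obj) (hG₁ : LoopFree G₁)
    (hrange : Set.range f.map = {q | Pointed q})
    (hrefl : ∀ α β, Prolong (f.map α) (f.map β) → Prolong α β) {e : G₁.E}
    (hnoloop : ∀ c, G₂.s c = f.obj (G₁.s e) → G₂.r c ≠ G₂.s c) :
    (f.map (Path.single G₁ e)).edges.length = 1 := by
  obtain ⟨d, ρ, hdρ⟩ := List.exists_cons_of_ne_nil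
    (f.map_edges_ne_nil hinj hG₁ (p := Path.single G₁ e) (List.cons_ne_nil e []))
  have hpath : G₂.IsPath (f.map (Path.single G₁ e)).src (d :: ρ) := hdρ ▸ (f.map _).isPath
  have hd : G₂.s d = f.obj (G₁.s e) := hpath.1.trans (f.map_src _)
  obtain ⟨p, hp⟩ : Path.single G₂ d ∈ Set.range f.map :=
    hrange ▸ pointed_single (hnoloop d hd).symm
  have hprolong : Prolong (f.map p) (f.map (Path.single G₁ e)) :=
    hp ▸ ⟨hpath.1.symm, ρ, hpath.2, hdρ⟩
  have hpe : p = Path.single G₁ e := (hrefl _ _ hprolong).eq_single fun h => by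
    simpa [hp, Path.single] using f.map_edges_eq_nil h
  rw [← hpe, hp]
  rfl

end PathFunctor

end DirGraph

open DirGraph in
/-- Under the hypotheses of the main theorem, a regular vertex `v` of `E₁` supports no
loop in `E₂`, and `f` maps every edge emitted from `v` to an edge. -/
theorem regular_vertex_image_is_edge {V E₁ E₂ : Type}
    (s₁ r₁ : E₁ → V) (s₂ r₂ : E₂ → V)
    (f : PathFunctor (DirGraph.mk V E₁ s₁ r₁) (DirGraph.mk V E₂ s₂ r₂))
    (hobj : ∀ v : V, f.obj v = v)
    (hnoloop : ∀ p : Path (DirGraph.mk V E₁ s₁ r₁), p.edges ≠ [] → p.src ≠ p.rng)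
    (hrefl : ∀ α β : Path (DirGraph.mk V E₁ s₁ r₁),
      Prolong (f.map α) (f.map β) → Prolong α β)
    (himg₁ : ∀ p : Path (DirGraph.mk V E₁ s₁ r₁), Pointed (f.map p))
    (himg₂ : ∀ q : Path (DirGraph.mk V E₂ s₂ r₂), Pointed q → ∃ p, f.map p = q)
    (v : V) (hemit : ∃ e : E₁, s₁ e = v) (hfin : Set.Finite {e : E₁ | s₁ e = v}) :
    (¬ ∃ q : Path (DirGraph.mk V E₂ s₂ r₂), q.edges ≠ [] ∧ q.src = v ∧ q.rng = v) ∧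
    (∀ e : E₁, s₁ e = v → (f.map (Path.single _ e)).edges.length = 1) := by
  have hinj : Function.Injective f.obj := fun a b h => (hobj a).symm.trans (h.trans (hobj b))
  have hrange : Set.range f.map = {q | Pointed q} :=
    Set.Subset.antisymm (Set.range_subset_iff.mpr himg₁) himg₂
  have hno_loop_edge : ∀ c : E₂, s₂ c = v → r₂ c ≠ s₂ c := by
    obtain ⟨e, rfl⟩ := hemit
    exact fun c hc hloop =>
      f.not_finite_of_loop_edge hinj hnoloop hrange (hc.trans (hobj _).symm) hloop hfin
  refine ⟨fun ⟨q, hne, hsrc, hrng⟩ => ?_, fun e he => ?_⟩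
  · by_cases hq : Pointed q
    · exact f.src_ne_rng_of_pointed hinj hnoloop hrange hq hne (hsrc.trans hrng.symm)
    · obtain ⟨c, hs, hr⟩ := exists_loop_edge_of_not_pointed hq
      exact hno_loop_edge c (hs.trans hrng) (hr.trans hs.symm)
  · subst he
    exact f.length_map_single_eq_one hinj hnoloop hrange hrefl fun c hc =>
      hno_loop_edge c (hc.trans (hobj _))
end
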